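/- arXiv:2102.07366 — 4 statements merged into one kernel-verified Lean document; each statement's English description precedes it below -/
import Mathlib

section
/- Let f : ℝⁿ → ℝ be convex, differentiable, L-smooth with minimizer x⋆. Let {θₖ} be positive with θ₀ = 1 and 0 ≤ θ_{k+1}² − θ_{k+1} ≤ θₖ² for all k ≥ 0, and set θ₋₁ = 0. Define the OGM iterates: y_{k+1} = xₖ − (1/L)∇f(xₖ), z_{k+1} = zₖ − (2θₖ/L)∇f(xₖ), x_{k+1} = (1 − 1/θ_{k+1})y_{k+1} + (1/θ_{k+1})z_{k+1}, with x₀ = y₀ = z₀. Define Uₖ = 2θₖ²(f(xₖ) − f(x⋆) − (1/(2L))‖∇f(xₖ)‖²) + (L/2)‖z_{k+1} − x⋆‖². Then U_{k+1} ≤ Uₖ for all k ≥ 0 (and U₀ ≤ U₋₁ with the convention x₋₁ = x₀). -/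
/-! For a convex function with `L`-Lipschitz gradient, convexity at `u` combined with the descent
lemma at `v`, applied to the point `v - (∇f v - ∇f u) / L`, gives the interpolation inequality
`f u + ⟪∇f u, v - u⟫ + ‖∇f v - ∇f u‖² / (2L) ≤ f v`.
The decrease `U k - U (k+1)` is exactly a combination of three instances of it, at the pairs
`(x (k+1), x⋆)`, `(x (k+1), x k)` and `(x⋆, x k)`, with weights `2θ'`, `2(θ'² - θ')` and
`2(θ² - θ'² + θ')` (where `θ = θ k`, `θ' = θ (k+1)`); the hypotheses on `θ` say exactly that
these weights are nonnegative. -/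

open RealInnerProductSpace

variable {F : Type*} [NormedAddCommGroup F] [InnerProductSpace ℝ F] {f : F → ℝ} {f' : F → F}
  {L : ℝ}

theorem HasGradientAt.hasDerivAt_comp_add_smul [CompleteSpace F] {g u d : F} {t : ℝ}
    (h : HasGradientAt f g (u + t • d)) :
    HasDerivAt (fun s : ℝ => f (u + s • d)) ⟪g, d⟫ t := by
  have := h.hasFDerivAt.comp_hasDerivAt t (((hasDerivAt_id t).smul_const d).const_add u)
  simp only [Function.comp_def, InnerProductSpace.toDual_apply_apply, id, one_smul] at this
  exact this

theorem ConvexOn.add_inner_le_of_hasGradientAt [CompleteSpace F]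
    (hconv : ConvexOn ℝ Set.univ f) {g u : F} (h : HasGradientAt f g u) (v : F) :
    f u + ⟪g, v - u⟫ ≤ f v := by
  have hline : ConvexOn ℝ Set.univ (fun t : ℝ => f (u + t • (v - u))) := by
    simpa [Function.comp_def, AffineMap.lineMap_apply, add_comm] using
      hconv.comp_affineMap (AffineMap.lineMap u v)
  have hd := (show HasGradientAt f g (u + (0 : ℝ) • (v - u)) by simpa).hasDerivAt_comp_add_smul
  exact le_sub_iff_add_le'.mp <| by
    simpa [slope_def_field] using
      hline.le_slope_of_hasDerivAt (Set.mem_univ 0) (Set.mem_univ 1) one_pos hd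

theorem le_add_inner_add_norm_sq_of_lipschitz_gradient [CompleteSpace F]
    (hdiff : ∀ x, HasGradientAt f (f' x) x)
    (hsmooth : ∀ x y, ‖f' x - f' y‖ ≤ L * ‖x - y‖) (u v : F) :
    f v ≤ f u + ⟪f' u, v - u⟫ + L / 2 * ‖v - u‖ ^ 2 := by
  set d := v - u
  set φ : ℝ → ℝ := fun t => f (u + t • d) - t * ⟪f' u, d⟫ - L / 2 * t ^ 2 * ‖d‖ ^ 2
  have hφ (t : ℝ) : HasDerivAt φ (⟪f' (u + t • d), d⟫ - ⟪f' u, d⟫ - L * t * ‖d‖ ^ 2) t := by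
    refine ((((hdiff (u + t • d)).hasDerivAt_comp_add_smul).sub
      ((hasDerivAt_id t).mul_const _)).sub
      (((hasDerivAt_pow 2 t).const_mul (L / 2)).mul_const (‖d‖ ^ 2))).congr_deriv ?_
    simp only [one_mul, Nat.cast_ofNat]; ring
  have hslope (t : ℝ) (ht : 0 ≤ t) :
      ⟪f' (u + t • d), d⟫ - ⟪f' u, d⟫ ≤ L * t * ‖d‖ ^ 2 := by
    have hlip : ‖f' (u + t • d) - f' u‖ ≤ L * (t * ‖d‖) := by
      simpa [norm_smul, abs_of_nonneg ht] using hsmooth (u + t • d) u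
    calc ⟪f' (u + t • d), d⟫ - ⟪f' u, d⟫ = ⟪f' (u + t • d) - f' u, d⟫ :=
          (inner_sub_left ..).symm
      _ ≤ ‖f' (u + t • d) - f' u‖ * ‖d‖ := real_inner_le_norm _ _
      _ ≤ L * (t * ‖d‖) * ‖d‖ := mul_le_mul_of_nonneg_right hlip (norm_nonneg d)
      _ = L * t * ‖d‖ ^ 2 := by ring
  have hanti : AntitoneOn φ (Set.Icc 0 1) :=
    antitoneOn_of_hasDerivWithinAt_nonpos (convex_Icc 0 1)
      (fun t _ => (hφ t).continuousAt.continuousWithinAt) (fun t _ => (hφ t).hasDerivWithinAt)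
      (fun t ht => sub_nonpos.2 (hslope t (interior_subset ht).1))
  have hφ10 : φ 1 ≤ φ 0 :=
    hanti (Set.left_mem_Icc.2 zero_le_one) (Set.right_mem_Icc.2 zero_le_one) zero_le_one
  simp only [φ, one_smul, zero_smul, add_zero, d, add_sub_cancel] at hφ10
  linarith

variable (f f' L) in
noncomputable def interpolationGap (u v : F) : ℝ :=
  f v - f u - ⟪f' u, v - u⟫ - 1 / (2 * L) * ‖f' v - f' u‖ ^ 2

theorem interpolationGap_nonneg [CompleteSpace F] (hL : 0 < L)
    (hdiff : ∀ x, HasGradientAt f (f' x) x) (hconv : ConvexOn ℝ Set.univ f)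
    (hsmooth : ∀ x y, ‖f' x - f' y‖ ≤ L * ‖x - y‖) (u v : F) :
    0 ≤ interpolationGap f f' L u v := by
  set g := f' v - f' u
  set w := v - L⁻¹ • g
  have hdescent := le_add_inner_add_norm_sq_of_lipschitz_gradient hdiff hsmooth v w
  have hconvex := hconv.add_inner_le_of_hasGradientAt (hdiff u) w
  have hwv : w - v = -(L⁻¹ • g) := by simp only [w]; abel
  have hwu : w - u = (v - u) - L⁻¹ • g := by simp only [w]; abel
  have hg : L⁻¹ * ⟪f' v, g⟫ - L⁻¹ * ⟪f' u, g⟫ = L⁻¹ * ‖g‖ ^ 2 := by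
    rw [← mul_sub, ← inner_sub_left, real_inner_self_eq_norm_sq]
  rw [hwv, inner_neg_right, real_inner_smul_right, norm_neg, norm_smul, Real.norm_of_nonneg
    (inv_nonneg.2 hL.le)] at hdescent
  rw [hwu, inner_sub_right, real_inner_smul_right] at hconvex
  have hsq : L⁻¹ * ‖g‖ ^ 2 - L / 2 * (L⁻¹ * ‖g‖) ^ 2 = 1 / (2 * L) * ‖g‖ ^ 2 := by
    field_simp; ring
  show 0 ≤ f v - f u - ⟪f' u, v - u⟫ - 1 / (2 * L) * ‖g‖ ^ 2
  linarith

theorem IsLocalMin.hasGradientAt_eq_zero [CompleteSpace F] {g a : F} (h : IsLocalMin f a)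
    (hf : HasGradientAt f g a) : g = 0 :=
  (InnerProductSpace.toDual ℝ F).map_eq_zero_iff.1 (h.hasFDerivAt_eq_zero hf.hasFDerivAt)

variable (f f' L) in
noncomputable def ogmLyapunov (xstar : F) (θ : ℝ) (x z : F) : ℝ :=
  2 * θ ^ 2 * (f x - f xstar - 1 / (2 * L) * ‖f' x‖ ^ 2) + L / 2 * ‖z - xstar‖ ^ 2

theorem ogmLyapunov_sub_ogmLyapunov {xstar : F} (hL : L ≠ 0) (hstar : f' xstar = 0)
    {θ θ' : ℝ} (hθ' : θ' ≠ 0) {a b z : F}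
    (hb : b = (1 - 1 / θ') • (a - (1 / L) • f' a) + (1 / θ') • z) :
    ogmLyapunov f f' L xstar θ a z - ogmLyapunov f f' L xstar θ' b (z - (2 * θ' / L) • f' b)
      = 2 * θ' * interpolationGap f f' L b xstar
        + 2 * (θ' ^ 2 - θ') * interpolationGap f f' L b a
        + 2 * (θ ^ 2 - (θ' ^ 2 - θ')) * interpolationGap f f' L xstar a := by
  have hz : z - xstar = θ' • (b - xstar) - (θ' - 1) • (a - xstar) + ((θ' - 1) / L) • f' a := by
    rw [hb]; match_scalars <;> field_simp <;> ring
  have hnorm : ‖z - (2 * θ' / L) • f' b - xstar‖ ^ 2 = ‖z - xstar‖ ^ 2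
      - 2 * (2 * θ' / L) * ⟪z - xstar, f' b⟫ + (2 * θ' / L) ^ 2 * ‖f' b‖ ^ 2 := by
    rw [sub_right_comm, norm_sub_sq_real, real_inner_smul_right, norm_smul, mul_pow,
      Real.norm_eq_abs, sq_abs]
    ring
  have hinner : ⟪z - xstar, f' b⟫ = θ' * ⟪b - xstar, f' b⟫ - (θ' - 1) * ⟪a - xstar, f' b⟫
      + ((θ' - 1) / L) * ⟪f' a, f' b⟫ := by
    rw [hz, inner_add_left, inner_sub_left, real_inner_smul_left, real_inner_smul_left,
      real_inner_smul_left]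
  have hgap_b_xstar : interpolationGap f f' L b xstar
      = f xstar - f b + ⟪b - xstar, f' b⟫ - 1 / (2 * L) * ‖f' b‖ ^ 2 := by
    rw [interpolationGap, hstar, zero_sub, norm_neg, ← neg_sub b, inner_neg_right,
      real_inner_comm]
    ring
  have hgap_b_a : interpolationGap f f' L b a
      = f a - f b - (⟪a - xstar, f' b⟫ - ⟪b - xstar, f' b⟫)
      - 1 / (2 * L) * (‖f' a‖ ^ 2 - 2 * ⟪f' a, f' b⟫ + ‖f' b‖ ^ 2) := by
    rw [interpolationGap, ← norm_sub_sq_real, ← inner_sub_left, sub_sub_sub_cancel_right,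
      real_inner_comm]
  have hgap_xstar_a : interpolationGap f f' L xstar a
      = f a - f xstar - 1 / (2 * L) * ‖f' a‖ ^ 2 := by
    rw [interpolationGap, hstar, inner_zero_left, sub_zero, sub_zero]
  rw [ogmLyapunov, ogmLyapunov, hnorm, hinner, hgap_b_xstar, hgap_b_a, hgap_xstar_a]
  field_simp
  ring

theorem ogmLyapunov_step_le [CompleteSpace F] {xstar : F} (hL : 0 < L)
    (hdiff : ∀ x, HasGradientAt f (f' x) x) (hconv : ConvexOn ℝ Set.univ f)
    (hsmooth : ∀ x y, ‖f' x - f' y‖ ≤ L * ‖x - y‖) (hstar : f' xstar = 0) {θ θ' : ℝ}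
    (hθ' : 0 < θ') (hθ'_lower : 0 ≤ θ' ^ 2 - θ') (hθ'_upper : θ' ^ 2 - θ' ≤ θ ^ 2) {a b z : F}
    (hb : b = (1 - 1 / θ') • (a - (1 / L) • f' a) + (1 / θ') • z) :
    ogmLyapunov f f' L xstar θ' b (z - (2 * θ' / L) • f' b) ≤ ogmLyapunov f f' L xstar θ a z := by
  have hgap := interpolationGap_nonneg hL hdiff hconv hsmooth
  have hdecrease := ogmLyapunov_sub_ogmLyapunov (f := f) hL.ne' hstar (θ := θ) hθ'.ne' hb
  rw [← sub_nonneg, hdecrease]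
  exact add_nonneg (add_nonneg (mul_nonneg (by positivity) (hgap b xstar))
    (mul_nonneg (by linarith) (hgap b a))) (mul_nonneg (by linarith) (hgap xstar a))

theorem ogm_lyapunov_monotone_general (n : ℕ)
    (f : EuclideanSpace ℝ (Fin n) → ℝ)
    (f' : EuclideanSpace ℝ (Fin n) → EuclideanSpace ℝ (Fin n))
    (L : ℝ) (hL : 0 < L)
    (hdiff : ∀ x, HasGradientAt f (f' x) x)
    (hconv : ConvexOn ℝ Set.univ f)
    (hsmooth : ∀ x y, ‖f' x - f' y‖ ≤ L * ‖x - y‖)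
    (xstar : EuclideanSpace ℝ (Fin n)) (hmin : ∀ y, f xstar ≤ f y)
    (θ : ℕ → ℝ) (hθpos : ∀ k, 0 < θ k) (hθ0 : θ 0 = 1)
    (hθrec : ∀ k, 0 ≤ θ (k + 1) ^ 2 - θ (k + 1) ∧ θ (k + 1) ^ 2 - θ (k + 1) ≤ θ k ^ 2)
    (x y z : ℕ → EuclideanSpace ℝ (Fin n))
    (hz0 : z 0 = x 0)
    (hy : ∀ k, y (k + 1) = x k - (1 / L) • f' (x k))
    (hz : ∀ k, z (k + 1) = z k - (2 * θ k / L) • f' (x k))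
    (hx : ∀ k, x (k + 1) = (1 - 1 / θ (k + 1)) • y (k + 1) + (1 / θ (k + 1)) • z (k + 1))
    (U : ℕ → ℝ)
    (hU : ∀ k, U k = 2 * θ k ^ 2 * (f (x k) - f xstar - (1 / (2 * L)) * ‖f' (x k)‖ ^ 2)
      + (L / 2) * ‖z (k + 1) - xstar‖ ^ 2) :
    (∀ k, U (k + 1) ≤ U k) ∧ U 0 ≤ (L / 2) * ‖x 0 - xstar‖ ^ 2 := by
  have hstar : f' xstar = 0 :=
    IsLocalMin.hasGradientAt_eq_zero (Filter.Eventually.of_forall hmin) (hdiff xstar)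
  refine ⟨fun k => ?_, ?_⟩
  · rw [hU, hU, hz (k + 1)]
    exact ogmLyapunov_step_le hL hdiff hconv hsmooth hstar (hθpos _) (hθrec k).1 (hθrec k).2
      (by rw [hx, hy])
  · -- the step from the convention θ₋₁ = 0, x₋₁ = z₀ = x₀
    have hfirst := ogmLyapunov_step_le hL hdiff hconv hsmooth hstar (θ := 0) (a := x 0)
      (b := x 0) (z := x 0) one_pos (by norm_num) (by norm_num) (by simp)
    rw [hU, hz 0, hz0, hθ0]
    simpa [ogmLyapunov] using hfirst

/-- Lyapunov monotonicity for the optimized gradient method (OGM). -/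
theorem ogm_lyapunov_monotone (n : ℕ)
    (f : EuclideanSpace ℝ (Fin n) → ℝ)
    (f' : EuclideanSpace ℝ (Fin n) → EuclideanSpace ℝ (Fin n))
    (L : ℝ) (hL : 0 < L)
    (hdiff : ∀ x, HasGradientAt f (f' x) x)
    (hconv : ConvexOn ℝ Set.univ f)
    (hsmooth : ∀ x y, ‖f' x - f' y‖ ≤ L * ‖x - y‖)
    (xstar : EuclideanSpace ℝ (Fin n)) (hmin : ∀ y, f xstar ≤ f y)
    (θ : ℕ → ℝ) (hθpos : ∀ k, 0 < θ k) (hθ0 : θ 0 = 1)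
    (hθrec : ∀ k, 0 ≤ θ (k + 1) ^ 2 - θ (k + 1) ∧ θ (k + 1) ^ 2 - θ (k + 1) ≤ θ k ^ 2)
    (x y z : ℕ → EuclideanSpace ℝ (Fin n))
    (hx0 : x 0 = y 0) (hz0 : z 0 = x 0)
    (hy : ∀ k, y (k + 1) = x k - (1 / L) • f' (x k))
    (hz : ∀ k, z (k + 1) = z k - (2 * θ k / L) • f' (x k))
    (hx : ∀ k, x (k + 1) = (1 - 1 / θ (k + 1)) • y (k + 1) + (1 / θ (k + 1)) • z (k + 1))
    (U : ℕ → ℝ)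
    (hU : ∀ k, U k = 2 * θ k ^ 2 * (f (x k) - f xstar - (1 / (2 * L)) * ‖f' (x k)‖ ^ 2)
      + (L / 2) * ‖z (k + 1) - xstar‖ ^ 2) :
    (∀ k, U (k + 1) ≤ U k) ∧ U 0 ≤ (L / 2) * ‖x 0 - xstar‖ ^ 2 :=
  ogm_lyapunov_monotone_general n f f' L hL hdiff hconv hsmooth xstar hmin θ hθpos hθ0 hθrec x y z
    hz0 hy hz hx U hU
end

section
/- Under the OGM setup (f convex, differentiable, L-smooth with minimizer x⋆; θ₀ = 1, 0 ≤ θ_{k+1}² − θ_{k+1} ≤ θₖ²; iterates y_{k+1} = xₖ − (1/L)∇f(xₖ), z_{k+1} = zₖ − (2θₖ/L)∇f(xₖ), x_{k+1} = (1 − 1/θ_{k+1})y_{k+1} + (1/θ_{k+1})z_{k+1}, x₀ = y₀ = z₀), one has f(yₖ) − f(x⋆) ≤ L‖x₀ − x⋆‖²/(4θ_{k−1}²) for all k ≥ 1. -/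
/-!
The proof is a Lyapunov argument. With `g = ∇f`, the potential
`Φₖ = θₖ² (f xₖ - f x⋆ - ‖g xₖ‖² / (2L)) + (L/4) ‖zₖ₊₁ - x⋆‖²`
is nonincreasing: `Φₖ - Φₖ₊₁` is the combination, with the nonnegative weights
`θₖ₊₁² - θₖ₊₁`, `θₖ₊₁` and `θₖ² - θₖ₊₁² + θₖ₊₁`, of the interpolation inequality
`f a + ⟪g a, b - a⟫ + ‖g a - g b‖² / (2L) ≤ f b` for smooth convex functions at the pairs
`(xₖ₊₁, xₖ)`, `(xₖ₊₁, x⋆)` and `(x⋆, xₖ)`. The same step taken from `θ₋₁ = 0`, `z₀ = x₀` gives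
`Φ₀ ≤ (L/4) ‖x₀ - x⋆‖²`, and a gradient step gives `f yₖ₊₁ ≤ f xₖ - ‖g xₖ‖² / (2L)`, so
`θₖ² (f yₖ₊₁ - f x⋆) ≤ Φₖ`.
-/

open RealInnerProductSpace InnerProductSpace AffineMap

variable {E : Type*} [NormedAddCommGroup E] [InnerProductSpace ℝ E]

section SmoothConvex

variable [CompleteSpace E] {f : E → ℝ} {f' : E → E} {L : ℝ}

theorem HasGradientAt.eq_zero_of_isLocalMin {g a : E} (h : HasGradientAt f g a)
    (hmin : IsLocalMin f a) : g = 0 :=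
  (toDual ℝ E).map_eq_zero_iff.1 (hmin.hasFDerivAt_eq_zero h.hasFDerivAt)

theorem HasGradientAt.hasDerivAt_comp_lineMap {g a b : E} {t : ℝ}
    (h : HasGradientAt f g (lineMap a b t)) :
    HasDerivAt (fun s => f (lineMap a b s)) ⟪g, b - a⟫ t := by
  simpa [Function.comp_def, toDual_apply_apply] using
    h.hasFDerivAt.comp_hasDerivAt t AffineMap.hasDerivAt_lineMap

theorem le_add_inner_add_of_lipschitz_gradient (hf : ∀ x, HasGradientAt f (f' x) x)
    (hsmooth : ∀ x y, ‖f' x - f' y‖ ≤ L * ‖x - y‖) (a b : E) :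
    f b ≤ f a + ⟪f' a, b - a⟫ + L / 2 * ‖b - a‖ ^ 2 := by
  set d := b - a
  -- the gap between `f` and its quadratic upper model along the segment is antitone
  set ψ : ℝ → ℝ := fun t => f (lineMap a b t) - t * ⟪f' a, d⟫ - L / 2 * t ^ 2 * ‖d‖ ^ 2
  have hψ : ∀ t, HasDerivAt ψ (⟪f' (lineMap a b t) - f' a, d⟫ - L * t * ‖d‖ ^ 2) t := by
    intro t
    have := (((hf (lineMap a b t)).hasDerivAt_comp_lineMap).sub
      ((hasDerivAt_id t).mul_const ⟪f' a, d⟫)).sub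
        (((hasDerivAt_pow 2 t).const_mul (L / 2)).mul_const (‖d‖ ^ 2))
    refine this.congr_deriv ?_
    rw [inner_sub_left]
    simp only [d]
    ring
  have hanti : AntitoneOn ψ (Set.Icc 0 1) := by
    refine antitoneOn_of_deriv_nonpos (convex_Icc 0 1)
      (fun t _ => (hψ t).continuousAt.continuousWithinAt)
      (fun t _ => (hψ t).differentiableAt.differentiableWithinAt) fun t ht => ?_
    rw [interior_Icc] at ht
    rw [(hψ t).deriv, sub_nonpos]
    calc ⟪f' (lineMap a b t) - f' a, d⟫ ≤ ‖f' (lineMap a b t) - f' a‖ * ‖d‖ :=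
          real_inner_le_norm _ _
      _ ≤ L * ‖lineMap a b t - a‖ * ‖d‖ := by gcongr; exact hsmooth _ _
      _ = L * t * ‖d‖ ^ 2 := by
          rw [← vsub_eq_sub, lineMap_vsub_left, norm_smul, Real.norm_of_nonneg ht.1.le,
            vsub_eq_sub]
          ring
  have := hanti (Set.left_mem_Icc.2 zero_le_one) (Set.right_mem_Icc.2 zero_le_one) zero_le_one
  simp only [ψ, lineMap_apply_zero, lineMap_apply_one] at this
  linarith

theorem ConvexOn.add_inner_le_of_hasGradientAt_s8 (hconv : ConvexOn ℝ Set.univ f)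
    (hf : ∀ x, HasGradientAt f (f' x) x) (a b : E) :
    f a + ⟪f' a, b - a⟫ ≤ f b := by
  have hline : ConvexOn ℝ Set.univ (fun t => f (lineMap a b t)) :=
    hconv.comp_affineMap (lineMap a b)
  have hderiv := (hf (lineMap a b (0 : ℝ))).hasDerivAt_comp_lineMap
  rw [lineMap_apply_zero] at hderiv
  have := hline.le_slope_of_hasDerivAt (Set.mem_univ 0) (Set.mem_univ 1) zero_lt_one hderiv
  rw [slope_def_field] at this
  simp only [lineMap_apply_zero, lineMap_apply_one, sub_zero, div_one] at this
  linarith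

theorem gradient_step_descent (hL : L ≠ 0) (hf : ∀ x, HasGradientAt f (f' x) x)
    (hsmooth : ∀ x y, ‖f' x - f' y‖ ≤ L * ‖x - y‖) (w : E) :
    f (w - (1 / L) • f' w) ≤ f w - 1 / (2 * L) * ‖f' w‖ ^ 2 := by
  calc f (w - (1 / L) • f' w)
      ≤ f w + ⟪f' w, -((1 / L) • f' w)⟫ + L / 2 * ‖-((1 / L) • f' w)‖ ^ 2 := by
        simpa using le_add_inner_add_of_lipschitz_gradient hf hsmooth w (w - (1 / L) • f' w)
    _ = f w - 1 / (2 * L) * ‖f' w‖ ^ 2 := by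
        rw [inner_neg_right, real_inner_smul_right, real_inner_self_eq_norm_sq, norm_neg,
          norm_smul, mul_pow, Real.norm_eq_abs, sq_abs]
        field_simp
        ring

theorem add_inner_add_norm_sq_le_of_lipschitz_gradient (hL : L ≠ 0)
    (hconv : ConvexOn ℝ Set.univ f) (hf : ∀ x, HasGradientAt f (f' x) x)
    (hsmooth : ∀ x y, ‖f' x - f' y‖ ≤ L * ‖x - y‖) (a b : E) :
    f a + ⟪f' a, b - a⟫ + 1 / (2 * L) * ‖f' a - f' b‖ ^ 2 ≤ f b := by
  -- tilting `f` by the linear function `⟪f' a, ·⟫` makes `a` a minimizer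
  set g : E → ℝ := fun w => f w - ⟪f' a, w⟫
  set g' : E → E := fun w => f' w - f' a
  have hg : ∀ w, HasGradientAt g (g' w) w := by
    intro w
    rw [hasGradientAt_iff_hasFDerivAt]
    simpa [g, g', map_sub, toDual_apply_apply, Pi.sub_def] using
      (hf w).hasFDerivAt.sub (toDual ℝ E (f' a)).hasFDerivAt
  have hgconv : ConvexOn ℝ Set.univ g :=
    hconv.sub ((innerₛₗ ℝ (f' a)).concaveOn convex_univ)
  have hgsmooth : ∀ u v, ‖g' u - g' v‖ ≤ L * ‖u - v‖ := by
    simpa [g'] using hsmooth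
  have hmin : g a ≤ g (b - (1 / L) • g' b) := by
    simpa [g'] using hgconv.add_inner_le_of_hasGradientAt_s8 hg a (b - (1 / L) • g' b)
  have := hmin.trans (gradient_step_descent hL hg hgsmooth b)
  simp only [g, g', norm_sub_rev (f' b)] at this
  linarith [inner_sub_right (𝕜 := ℝ) (f' a) b a]

end SmoothConvex

noncomputable def ogmPotential (f : E → ℝ) (f' : E → E) (L : ℝ) (xstar : E) (θ : ℝ) (x z : E) :
    ℝ :=
  θ ^ 2 * (f x - f xstar - 1 / (2 * L) * ‖f' x‖ ^ 2) + L / 4 * ‖z - xstar‖ ^ 2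

section OGM

variable [CompleteSpace E] {f : E → ℝ} {f' : E → E} {L : ℝ}

theorem ogmPotential_step_le (hL : L ≠ 0) (hconv : ConvexOn ℝ Set.univ f)
    (hf : ∀ x, HasGradientAt f (f' x) x) (hsmooth : ∀ x y, ‖f' x - f' y‖ ≤ L * ‖x - y‖)
    {xstar : E} (hstar : f' xstar = 0) {a b : ℝ} (hb : 0 < b) (hb1 : 0 ≤ b ^ 2 - b)
    (hab : b ^ 2 - b ≤ a ^ 2) {u z u' z' : E}
    (hu' : u' = (1 - 1 / b) • (u - (1 / L) • f' u) + (1 / b) • z)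
    (hz' : z' = z - (2 * b / L) • f' u') :
    ogmPotential f f' L xstar b u' z' ≤ ogmPotential f f' L xstar a u z := by
  have interp := add_inner_add_norm_sq_le_of_lipschitz_gradient hL hconv hf hsmooth
  set g₀ := f' u
  set g₁ := f' u'
  have hprev : f u' + (⟪g₁, u - xstar⟫ - ⟪g₁, u' - xstar⟫)
      + 1 / (2 * L) * (‖g₁‖ ^ 2 - 2 * ⟪g₁, g₀⟫ + ‖g₀‖ ^ 2) ≤ f u := by
    rw [← inner_sub_right, sub_sub_sub_cancel_right, ← norm_sub_sq_real]
    exact interp u' u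
  have hopt : f u' - ⟪g₁, u' - xstar⟫ + 1 / (2 * L) * ‖g₁‖ ^ 2 ≤ f xstar := by
    have h := interp u' xstar
    rw [hstar, sub_zero, ← neg_sub, inner_neg_right] at h
    linarith
  have hcur : f xstar + 1 / (2 * L) * ‖g₀‖ ^ 2 ≤ f u := by
    simpa [hstar] using interp xstar u
  have hz : z - xstar = b • (u' - xstar) - (b - 1) • (u - xstar) + ((b - 1) / L) • g₀ := by
    rw [hu']
    match_scalars <;> field_simp <;> ring
  have hnorm : ‖z' - xstar‖ ^ 2 = ‖z - xstar‖ ^ 2 - 4 * b / L * ⟪g₁, z - xstar⟫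
      + 4 * b ^ 2 / L ^ 2 * ‖g₁‖ ^ 2 := by
    rw [hz', sub_right_comm, norm_sub_sq_real, real_inner_smul_right, norm_smul, mul_pow,
      Real.norm_eq_abs, sq_abs, real_inner_comm]
    ring
  have hinner : ⟪g₁, z - xstar⟫ = b * ⟪g₁, u' - xstar⟫ - (b - 1) * ⟪g₁, u - xstar⟫
      + (b - 1) / L * ⟪g₁, g₀⟫ := by
    rw [hz, inner_add_right, inner_sub_right, real_inner_smul_right, real_inner_smul_right,
      real_inner_smul_right]
  have h1 := mul_le_mul_of_nonneg_left hprev hb1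
  have h2 := mul_le_mul_of_nonneg_left hopt hb.le
  have h3 := mul_le_mul_of_nonneg_left hcur (sub_nonneg.2 hab)
  unfold ogmPotential
  rw [hnorm, hinner]
  linear_combination (norm := skip) h1 + h2 + h3
  refine le_of_eq ?_
  field_simp
  ring

theorem ogmPotential_le (hL : L ≠ 0) (hconv : ConvexOn ℝ Set.univ f)
    (hf : ∀ x, HasGradientAt f (f' x) x) (hsmooth : ∀ x y, ‖f' x - f' y‖ ≤ L * ‖x - y‖)
    {xstar : E} (hstar : f' xstar = 0) {θ : ℕ → ℝ} (hθpos : ∀ k, 0 < θ k) (hθ0 : θ 0 = 1)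
    (hθrec : ∀ k, 0 ≤ θ (k + 1) ^ 2 - θ (k + 1) ∧ θ (k + 1) ^ 2 - θ (k + 1) ≤ θ k ^ 2)
    {x y z : ℕ → E} (hz0 : z 0 = x 0)
    (hy : ∀ k, y (k + 1) = x k - (1 / L) • f' (x k))
    (hz : ∀ k, z (k + 1) = z k - (2 * θ k / L) • f' (x k))
    (hx : ∀ k, x (k + 1) = (1 - 1 / θ (k + 1)) • y (k + 1) + (1 / θ (k + 1)) • z (k + 1))
    (k : ℕ) :
    ogmPotential f f' L xstar (θ k) (x k) (z (k + 1)) ≤ L / 4 * ‖x 0 - xstar‖ ^ 2 := by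
  induction k with
  | zero =>
    -- the step from the virtual state `θ₋₁ = 0`, `x₋₁ = z₀ = x₀`
    calc ogmPotential f f' L xstar (θ 0) (x 0) (z 1)
        ≤ ogmPotential f f' L xstar 0 (x 0) (x 0) :=
          ogmPotential_step_le hL hconv hf hsmooth hstar (hθ0 ▸ one_pos) (by simp [hθ0])
            (by simp [hθ0]) (by simp [hθ0]) (by rw [hz, hz0])
      _ = L / 4 * ‖x 0 - xstar‖ ^ 2 := by simp [ogmPotential]
  | succ k ih =>
    refine le_trans ?_ ih
    exact ogmPotential_step_le hL hconv hf hsmooth hstar (hθpos (k + 1)) (hθrec k).1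
      (hθrec k).2 (by rw [hx, hy]) (hz (k + 1))

end OGM

theorem ogm_primary_rate_general (n : ℕ)
    (f : EuclideanSpace ℝ (Fin n) → ℝ)
    (f' : EuclideanSpace ℝ (Fin n) → EuclideanSpace ℝ (Fin n))
    (L : ℝ) (hL : 0 < L)
    (hdiff : ∀ x, HasGradientAt f (f' x) x)
    (hconv : ConvexOn ℝ Set.univ f)
    (hsmooth : ∀ x y, ‖f' x - f' y‖ ≤ L * ‖x - y‖)
    (xstar : EuclideanSpace ℝ (Fin n)) (hmin : ∀ y, f xstar ≤ f y)
    (θ : ℕ → ℝ) (hθpos : ∀ k, 0 < θ k) (hθ0 : θ 0 = 1)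
    (hθrec : ∀ k, 0 ≤ θ (k + 1) ^ 2 - θ (k + 1) ∧ θ (k + 1) ^ 2 - θ (k + 1) ≤ θ k ^ 2)
    (x y z : ℕ → EuclideanSpace ℝ (Fin n))
    (hz0 : z 0 = x 0)
    (hy : ∀ k, y (k + 1) = x k - (1 / L) • f' (x k))
    (hz : ∀ k, z (k + 1) = z k - (2 * θ k / L) • f' (x k))
    (hx : ∀ k, x (k + 1) = (1 - 1 / θ (k + 1)) • y (k + 1) + (1 / θ (k + 1)) • z (k + 1)) :
    ∀ k, 1 ≤ k → f (y k) - f xstar ≤ L * ‖x 0 - xstar‖ ^ 2 / (4 * θ (k - 1) ^ 2) := by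
  intro k hk
  obtain ⟨m, rfl⟩ := Nat.exists_eq_add_of_le' hk
  have hstar : f' xstar = 0 :=
    (hdiff xstar).eq_zero_of_isLocalMin (Filter.Eventually.of_forall hmin)
  have hpot := ogmPotential_le hL.ne' hconv hdiff hsmooth hstar hθpos hθ0 hθrec hz0 hy hz hx m
  have hdescent : θ m ^ 2 * f (y (m + 1)) ≤
      θ m ^ 2 * (f (x m) - 1 / (2 * L) * ‖f' (x m)‖ ^ 2) := by
    rw [hy]
    exact mul_le_mul_of_nonneg_left (gradient_step_descent hL.ne' hdiff hsmooth (x m)) (sq_nonneg _)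
  have hz_nonneg : 0 ≤ L / 4 * ‖z (m + 1) - xstar‖ ^ 2 := by positivity
  rw [Nat.add_sub_cancel, le_div_iff₀ (by have := hθpos m; positivity)]
  unfold ogmPotential at hpot
  linarith

/-- Convergence rate of OGM's primary sequence:
`f(yₖ) − f⋆ ≤ L‖x₀ − x⋆‖² / (4θ_{k−1}²)` for `k ≥ 1`. -/
theorem ogm_primary_rate (n : ℕ)
    (f : EuclideanSpace ℝ (Fin n) → ℝ)
    (f' : EuclideanSpace ℝ (Fin n) → EuclideanSpace ℝ (Fin n))
    (L : ℝ) (hL : 0 < L)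
    (hdiff : ∀ x, HasGradientAt f (f' x) x)
    (hconv : ConvexOn ℝ Set.univ f)
    (hsmooth : ∀ x y, ‖f' x - f' y‖ ≤ L * ‖x - y‖)
    (xstar : EuclideanSpace ℝ (Fin n)) (hmin : ∀ y, f xstar ≤ f y)
    (θ : ℕ → ℝ) (hθpos : ∀ k, 0 < θ k) (hθ0 : θ 0 = 1)
    (hθrec : ∀ k, 0 ≤ θ (k + 1) ^ 2 - θ (k + 1) ∧ θ (k + 1) ^ 2 - θ (k + 1) ≤ θ k ^ 2)
    (x y z : ℕ → EuclideanSpace ℝ (Fin n))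
    (hx0 : x 0 = y 0) (hz0 : z 0 = x 0)
    (hy : ∀ k, y (k + 1) = x k - (1 / L) • f' (x k))
    (hz : ∀ k, z (k + 1) = z k - (2 * θ k / L) • f' (x k))
    (hx : ∀ k, x (k + 1) = (1 - 1 / θ (k + 1)) • y (k + 1) + (1 / θ (k + 1)) • z (k + 1)) :
    ∀ k, 1 ≤ k → f (y k) - f xstar ≤ L * ‖x 0 - xstar‖ ^ 2 / (4 * θ (k - 1) ^ 2) :=
  ogm_primary_rate_general n f f' L hL hdiff hconv hsmooth xstar hmin θ hθpos hθ0 hθrec x y z hz0 hy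
    hz hx
end

section
/- Let w : ℝⁿ → ℝ be differentiable and 1-strongly convex with respect to a quadratic norm ‖·‖ (given by s.p.d. matrix Q), with Bregman divergence V_x(y) = w(y) − ⟨∇w(x), y−x⟩ − w(x). Consider linear coupling iterates with z_{k+1} = argmin_y { V_{zₖ}(y) + ⟨α_{k+1}∇f(xₖ), y − xₖ⟩ }. Then for any minimizer x⋆ of f: α_{k+1}⟨∇f(xₖ), zₖ − x⋆⟩ ≤ (α_{k+1}²/2)‖∇f(xₖ)‖*² + V_{zₖ}(x⋆) − V_{z_{k+1}}(x⋆). -/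
/-! The minimiser `z_{k+1}` of the mirror step is characterised by the first-order condition
`∇w(z_k) - ∇w(z_{k+1}) = α ∇f(x_k)`. With it, the three-point identity of Bregman divergences
turns `α ⟪∇f(x_k), z_{k+1} - x⋆⟫` into `V_{z_k}(x⋆) - V_{z_{k+1}}(x⋆) - V_{z_k}(z_{k+1})`.
Strong convexity of `w` bounds `V_{z_k}(z_{k+1})` below by `½ ‖z_k - z_{k+1}‖²`, which absorbs the
remaining term `α ⟪∇f(x_k), z_k - z_{k+1}⟫` by Young's inequality for the dual pair of
quadratic norms `‖·‖` and `‖·‖*`. -/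

open RealInnerProductSpace

section

variable {E : Type*} [NormedAddCommGroup E] [InnerProductSpace ℝ E]

theorem mul_inner_le_young_of_isSymmetric {Q Qinv : E →L[ℝ] E}
    (hQ : (Q : E →ₗ[ℝ] E).IsSymmetric) (hQpos : ∀ x, 0 ≤ ⟪x, Q x⟫)
    (hQinv : ∀ x, Q (Qinv x) = x) (c : ℝ) (g u : E) :
    c * ⟪g, u⟫ ≤ (c ^ 2 / 2) * ⟪g, Qinv g⟫ + (1 / 2) * ⟪u, Q u⟫ := by
  have hsq := hQpos (u - c • Qinv g)
  have hcross : ⟪Qinv g, Q u⟫ = ⟪g, u⟫ := by rw [← hQ.apply_clm, hQinv]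
  simp only [map_sub, map_smul, hQinv, inner_sub_left, inner_sub_right, real_inner_smul_left,
    real_inner_smul_right, hcross, real_inner_comm g u, real_inner_comm g (Qinv g)] at hsq
  nlinarith

def bregmanDiv (w : E → ℝ) (w' : E → E) (a b : E) : ℝ :=
  w b - ⟪w' a, b - a⟫ - w a

theorem bregmanDiv_three_point (w : E → ℝ) (w' : E → E) (a b c : E) :
    ⟪w' a - w' b, b - c⟫ = bregmanDiv w w' a c - bregmanDiv w w' b c - bregmanDiv w w' a b := by
  simp only [bregmanDiv, inner_sub_left, inner_sub_right]
  ring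

variable [CompleteSpace E]

theorem ConvexOn.add_inner_sub_le_of_hasGradientAt {g : E → ℝ} {g' x : E}
    (hg : ConvexOn ℝ Set.univ g) (hd : HasGradientAt g g' x) (y : E) :
    g x + ⟪g', y - x⟫ ≤ g y := by
  set ℓ : ℝ →ᵃ[ℝ] E := AffineMap.lineMap x y
  have hderiv : HasDerivAt (g ∘ ℓ) ⟪g', y - x⟫ 0 := by
    have hline : HasDerivAt ℓ (y - x) 0 := AffineMap.hasDerivAt_lineMap
    simpa using hd.hasFDerivAt.comp_hasDerivAt_of_eq (0 : ℝ) hline (by simp [ℓ])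
  have hslope := (hg.comp_affineMap ℓ).le_slope_of_hasDerivAt
    (Set.mem_univ 0) (Set.mem_univ 1) one_pos hderiv
  simp only [slope_def_field, Function.comp_apply, AffineMap.lineMap_apply_one,
    AffineMap.lineMap_apply_zero, sub_zero, div_one, ℓ] at hslope
  linarith

theorem IsMinOn.hasGradientAt_eq_zero {φ : E → ℝ} {φ' a : E} (h : IsMinOn φ Set.univ a)
    (hd : HasGradientAt φ φ' a) : φ' = 0 := by
  simpa using (h.isLocalMin Filter.univ_mem).hasFDerivAt_eq_zero hd.hasFDerivAt

theorem HasGradientAt.add {f g : E → ℝ} {f' g' x : E} (hf : HasGradientAt f f' x)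
    (hg : HasGradientAt g g' x) : HasGradientAt (fun y => f y + g y) (f' + g') x := by
  rw [hasGradientAt_iff_hasFDerivAt, map_add]
  exact hf.hasFDerivAt.add hg.hasFDerivAt

theorem HasGradientAt.sub {f g : E → ℝ} {f' g' x : E} (hf : HasGradientAt f f' x)
    (hg : HasGradientAt g g' x) : HasGradientAt (fun y => f y - g y) (f' - g') x := by
  rw [hasGradientAt_iff_hasFDerivAt, map_sub]
  exact hf.hasFDerivAt.sub hg.hasFDerivAt

theorem HasGradientAt.const_mul {f : E → ℝ} {f' x : E} (hf : HasGradientAt f f' x) (c : ℝ) :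
    HasGradientAt (fun y => c * f y) (c • f') x := by
  rw [hasGradientAt_iff_hasFDerivAt, map_smul]
  exact hf.hasFDerivAt.const_mul c

theorem hasGradientAt_inner_sub_const (c x₀ x : E) :
    HasGradientAt (fun y => ⟪c, y - x₀⟫) c x := by
  rw [hasGradientAt_iff_hasFDerivAt]
  have := ((InnerProductSpace.toDual ℝ E c).hasFDerivAt (x := x)).sub_const ⟪c, x₀⟫
  simpa [inner_sub_right] using this

theorem LinearMap.IsSymmetric.hasGradientAt_half_inner_self_apply {Q : E →L[ℝ] E}
    (hQ : (Q : E →ₗ[ℝ] E).IsSymmetric) (x : E) :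
    HasGradientAt (fun x => (1 / 2) * ⟪x, Q x⟫) (Q x) x := by
  rw [hasGradientAt_iff_hasFDerivAt]
  have hquad : (fun x => (1 / 2) * ⟪x, Q x⟫) = fun x => (1 / 2) * Q.reApplyInnerSelf x := by
    ext y; simp [ContinuousLinearMap.reApplyInnerSelf_apply, real_inner_comm]
  rw [hquad]
  have hderiv := (hQ.hasStrictFDerivAt_reApplyInnerSelf x).hasFDerivAt.const_mul (1 / 2 : ℝ)
  refine hderiv.congr_fderiv ?_
  ext y; simp

variable {w : E → ℝ} {w' : E → E}

theorem half_inner_sub_le_bregmanDiv {Q : E →L[ℝ] E} (hQ : (Q : E →ₗ[ℝ] E).IsSymmetric)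
    {a : E} (hw : HasGradientAt w (w' a) a)
    (hsc : ConvexOn ℝ Set.univ (fun x => w x - (1 / 2) * ⟪x, Q x⟫)) (b : E) :
    (1 / 2) * ⟪a - b, Q (a - b)⟫ ≤ bregmanDiv w w' a b := by
  have hfirst := hsc.add_inner_sub_le_of_hasGradientAt
    (hw.sub (hQ.hasGradientAt_half_inner_self_apply a)) b
  have hsymm := hQ.apply_clm a b
  simp only [bregmanDiv, map_sub, inner_sub_left, inner_sub_right] at hfirst ⊢
  linarith [real_inner_comm a (Q a), real_inner_comm a (Q b), real_inner_comm b (Q a)]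

theorem hasGradientAt_bregmanDiv {a b : E} (hw : HasGradientAt w (w' b) b) :
    HasGradientAt (bregmanDiv w w' a) (w' b - w' a) b := by
  have h := (hw.sub (hasGradientAt_inner_sub_const (w' a) a b)).sub (hasGradientAt_const b (w a))
  rwa [sub_zero] at h

theorem IsMinOn.sub_eq_smul_of_bregmanDiv_add_inner {a b g x : E} {c : ℝ}
    (hw : HasGradientAt w (w' b) b)
    (hmin : IsMinOn (fun y => bregmanDiv w w' a y + c * ⟪g, y - x⟫) Set.univ b) :
    w' a - w' b = c • g := by
  have hgrad : HasGradientAt (fun y => bregmanDiv w w' a y + c * ⟪g, y - x⟫)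
      (w' b - w' a + c • g) b :=
    (hasGradientAt_bregmanDiv hw).add ((hasGradientAt_inner_sub_const g x b).const_mul c)
  rw [← sub_eq_zero, ← neg_eq_zero]
  convert hmin.hasGradientAt_eq_zero hgrad using 1
  abel

end

theorem mirror_descent_step_general (n : ℕ)
    (Q Qinv : EuclideanSpace ℝ (Fin n) →L[ℝ] EuclideanSpace ℝ (Fin n))
    (hsymm : ∀ x y, ⟪Q x, y⟫ = ⟪x, Q y⟫)
    (hpd : ∀ x, x ≠ 0 → 0 < ⟪x, Q x⟫)
    (hinv₁ : ∀ x, Q (Qinv x) = x)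
    (f' : EuclideanSpace ℝ (Fin n) → EuclideanSpace ℝ (Fin n))
    (L : ℝ)
    (xstar : EuclideanSpace ℝ (Fin n))
    (w : EuclideanSpace ℝ (Fin n) → ℝ)
    (w' : EuclideanSpace ℝ (Fin n) → EuclideanSpace ℝ (Fin n))
    (hwdiff : ∀ x, HasGradientAt w (w' x) x)
    (hwsc : ConvexOn ℝ Set.univ (fun x => w x - (1 / 2) * ⟪x, Q x⟫))
    (V : EuclideanSpace ℝ (Fin n) → EuclideanSpace ℝ (Fin n) → ℝ)
    (hV : ∀ a b, V a b = w b - ⟪w' a, b - a⟫ - w a)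
    (α : ℝ)
    (xk zk zk1 : EuclideanSpace ℝ (Fin n))
    (hargmin : IsMinOn (fun y => V zk y + α * ⟪f' xk, y - xk⟫) Set.univ zk1) :
    α * ⟪f' xk, zk - xstar⟫
      ≤ (α ^ 2 / 2) * ⟪f' xk, Qinv (f' xk)⟫ + V zk xstar - V zk1 xstar := by
  obtain rfl : V = bregmanDiv w w' := funext₂ hV
  have hQpos : ∀ x, 0 ≤ ⟪x, Q x⟫ := fun x => by
    rcases eq_or_ne x 0 with rfl | hx
    · simp
    · exact (hpd x hx).le
  have hthree := bregmanDiv_three_point w w' zk zk1 xstar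
  rw [hargmin.sub_eq_smul_of_bregmanDiv_add_inner (hwdiff zk1), real_inner_smul_left] at hthree
  have hstrong := half_inner_sub_le_bregmanDiv hsymm (hwdiff zk) hwsc zk1
  have hyoung := mul_inner_le_young_of_isSymmetric hsymm hQpos hinv₁ α (f' xk) (zk - zk1)
  have hsplit : ⟪f' xk, zk - xstar⟫ = ⟪f' xk, zk - zk1⟫ + ⟪f' xk, zk1 - xstar⟫ := by
    rw [← inner_add_right, sub_add_sub_cancel]
  rw [hsplit]
  linarith

/-- Mirror-descent step guarantee (Allen-Zhu–Orecchia Lemma 4.2, first part)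
for a Bregman divergence generated by a distance generating function `w` that is
1-strongly convex with respect to the quadratic norm `‖x‖² = ⟨x, Qx⟩`
(dual norm `‖u‖*² = ⟨u, Q⁻¹u⟩`). -/
theorem mirror_descent_step (n : ℕ)
    (Q Qinv : EuclideanSpace ℝ (Fin n) →L[ℝ] EuclideanSpace ℝ (Fin n))
    (hsymm : ∀ x y, ⟪Q x, y⟫ = ⟪x, Q y⟫)
    (hpd : ∀ x, x ≠ 0 → 0 < ⟪x, Q x⟫)
    (hinv₁ : ∀ x, Q (Qinv x) = x) (hinv₂ : ∀ x, Qinv (Q x) = x)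
    (f : EuclideanSpace ℝ (Fin n) → ℝ)
    (f' : EuclideanSpace ℝ (Fin n) → EuclideanSpace ℝ (Fin n))
    (L : ℝ) (hL : 0 < L)
    (hdiff : ∀ x, HasGradientAt f (f' x) x)
    (hconv : ConvexOn ℝ Set.univ f)
    (hsmooth : ∀ x y, Real.sqrt ⟪f' x - f' y, Qinv (f' x - f' y)⟫
      ≤ L * Real.sqrt ⟪x - y, Q (x - y)⟫)
    (xstar : EuclideanSpace ℝ (Fin n)) (hmin : ∀ y, f xstar ≤ f y)
    (w : EuclideanSpace ℝ (Fin n) → ℝ)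
    (w' : EuclideanSpace ℝ (Fin n) → EuclideanSpace ℝ (Fin n))
    (hwdiff : ∀ x, HasGradientAt w (w' x) x)
    (hwsc : ConvexOn ℝ Set.univ (fun x => w x - (1 / 2) * ⟪x, Q x⟫))
    (V : EuclideanSpace ℝ (Fin n) → EuclideanSpace ℝ (Fin n) → ℝ)
    (hV : ∀ a b, V a b = w b - ⟪w' a, b - a⟫ - w a)
    (α : ℝ) (hα : 0 < α)
    (xk zk zk1 : EuclideanSpace ℝ (Fin n))
    (hargmin : IsMinOn (fun y => V zk y + α * ⟪f' xk, y - xk⟫) Set.univ zk1) :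
    α * ⟪f' xk, zk - xstar⟫
      ≤ (α ^ 2 / 2) * ⟪f' xk, Qinv (f' xk)⟫ + V zk xstar - V zk1 xstar :=
  mirror_descent_step_general n Q Qinv hsymm hpd hinv₁ f' L xstar w w' hwdiff hwsc V hV α xk zk zk1
    hargmin
end

section
/- Fix t ∈ (0,1] and a positive sequence {θₖ} with θ₀ = 1. The iteration y_{k+1} = xₖ − (1/L)∇f(xₖ), z_{k+1} = zₖ − (2tθₖ/L)∇f(xₖ), x_{k+1} = (1 − 1/θ_{k+1})y_{k+1} + (1/θ_{k+1})z_{k+1} with x₀ = y₀ = z₀ generates the same x-sequence as y_{k+1} = xₖ − (1/L)∇f(xₖ), x_{k+1} = y_{k+1} + ((θₖ−1)/θ_{k+1})(y_{k+1} − yₖ) + (2t−1)(θₖ/θ_{k+1})(y_{k+1} − xₖ). -/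
open RealInnerProductSpace

/-- The three-sequence (`x`,`y`,`z`) form and the momentum-plus-correction form
of the unified AGM/OGM family generate the same `x`-sequence. -/
theorem agm_ogm_unification_equiv (n : ℕ)
    (g : EuclideanSpace ℝ (Fin n) → EuclideanSpace ℝ (Fin n))
    (L : ℝ) (hL : 0 < L)
    (t : ℝ) (ht0 : 0 < t) (ht1 : t ≤ 1)
    (θ : ℕ → ℝ) (hθpos : ∀ k, 0 < θ k) (hθ0 : θ 0 = 1)
    (x y z x' y' : ℕ → EuclideanSpace ℝ (Fin n))
    (hx0 : x 0 = y 0) (hz0 : z 0 = x 0)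
    (hy : ∀ k, y (k + 1) = x k - (1 / L) • g (x k))
    (hz : ∀ k, z (k + 1) = z k - (2 * t * θ k / L) • g (x k))
    (hx : ∀ k, x (k + 1) = (1 - 1 / θ (k + 1)) • y (k + 1) + (1 / θ (k + 1)) • z (k + 1))
    (hx'0 : x' 0 = x 0) (hy'0 : y' 0 = x' 0)
    (hy' : ∀ k, y' (k + 1) = x' k - (1 / L) • g (x' k))
    (hx' : ∀ k, x' (k + 1) = y' (k + 1)
      + ((θ k - 1) / θ (k + 1)) • (y' (k + 1) - y' k)
      + ((2 * t - 1) * (θ k / θ (k + 1))) • (y' (k + 1) - x' k)) :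
    ∀ k, x k = x' k := by
  have hLne : L ≠ 0 := hL.ne'
  have key : ∀ k, x k = x' k ∧ y k = y' k ∧ z k = θ k • x k - (θ k - 1) • y k := by
    intro k
    induction k with
    | zero =>
      refine ⟨hx'0.symm, by rw [hy'0, hx'0, hx0], ?_⟩
      rw [hz0, hθ0, hx0]; module
    | succ k ih =>
      obtain ⟨hxe, hye, hze⟩ := ih
      have hyy : y (k + 1) = y' (k + 1) := by rw [hy, hy', hxe]
      have hg : (1 / L) • g (x k) = x k - y (k + 1) := by rw [hy]; module
      have hθ1 := (hθpos (k + 1)).ne'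
      have hθk := (hθpos k).ne'
      have hz1 : z (k + 1)
          = θ k • x k - (θ k - 1) • y k - (2 * t * θ k) • (x k - y (k + 1)) := by
        rw [hz, hze, ← hg]
        match_scalars <;> field_simp <;> ring
      have hxx : x (k + 1) = x' (k + 1) := by
        rw [hx, hx', hz1, ← hyy, ← hxe, ← hye]
        match_scalars <;> field_simp <;> ring
      refine ⟨hxx, hyy, ?_⟩
      rw [hx]
      match_scalars <;> field_simp <;> ring
  exact fun k => (key k).1
end
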